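/- arXiv:1006.5768 — 3 statements merged into one kernel-verified Lean document; each statement's English description precedes it below -/
import Mathlib

section
/- The comparison of bitstrings that first compares lengths, and for equal lengths compares lexicographically from the most significant end (i.e., the last differing bit decides, with 0 < 1), coincides with the natural order of their bijective base-2 decodings: cmp(x,y) = compare(d(x), d(y)). -/
/-- Bitstrings: finite lists over {0,1}; `false` = 0, `true` = 1,
least significant digit first. -/
abbrev BitString := List Bool

/-- Successor in bijective base-2. -/
def bsucc : BitString → BitString
  | [] => [false]
  | false :: xs => true :: xs
  | true :: xs => false :: bsucc xs

/-- Bijective base-2 decoding. -/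
def bdec : BitString → ℕ
  | [] => 0
  | false :: xs => 2 * bdec xs + 1
  | true :: xs => 2 * bdec xs + 2

/-- Comparison of same-length bitstrings: the result of comparing the tails
(more significant bits) takes precedence over the heads; 0 < 1. -/
def samelenCmp : BitString → BitString → Ordering
  | [], [] => .eq
  | [], _ :: _ => .lt
  | _ :: _, [] => .gt
  | false :: xs, false :: ys => samelenCmp xs ys
  | true :: xs, true :: ys => samelenCmp xs ys
  | false :: xs, true :: ys =>
      match samelenCmp xs ys with
      | .eq => .lt
      | o => o
  | true :: xs, false :: ys =>
      match samelenCmp xs ys with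
      | .eq => .gt
      | o => o

/-- Length-first comparison of bitstrings. -/
def bcmp (x y : BitString) : Ordering :=
  match compare x.length y.length with
  | .eq => samelenCmp x y
  | o => o

/-!
Write `v x := bdec x + 1`. Then `v (b :: xs) = 2 * v xs + b.toNat`, so `v x` is the ordinary binary
value of `x` with an extra most significant `1`; hence a string of length `n` has `2 ^ n ≤ v x < 2 ^ (n + 1)`,
and a shorter string decodes to a smaller number. For strings of equal length, comparing
`2 * v xs + b` with `2 * v ys + c` is comparing the pairs `(v xs, b)` and `(v ys, c)`
lexicographically, which is the recursion defining `samelenCmp`.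
-/

theorem Nat.compare_add_right_add_right (a b c : ℕ) : compare (a + c) (b + c) = compare a b := by
  simpa [cmp_eq_compare] using cmp_add_right a b c

theorem Nat.compare_mul_add_mul_add {n a b i j : ℕ} (hi : i < n) (hj : j < n) :
    compare (n * a + i) (n * b + j) = (compare a b).then (compare i j) := by
  rcases lt_trichotomy a b with hab | rfl | hab
  · have : n * a + i < n * b + j := by nlinarith
    simp [Nat.compare_eq_lt.mpr hab, Nat.compare_eq_lt.mpr this]
  · simpa [cmp_eq_compare] using cmp_add_left (n * a) i j
  · have : n * b + j < n * a + i := by nlinarith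
    simp [Nat.compare_eq_gt.mpr hab, Nat.compare_eq_gt.mpr this]

theorem bdec_cons_add_one (b : Bool) (xs : BitString) :
    bdec (b :: xs) + 1 = 2 * (bdec xs + 1) + b.toNat := by
  cases b <;> simp only [bdec, Bool.toNat_false, Bool.toNat_true] <;> ring

theorem samelenCmp_cons_cons (b c : Bool) (xs ys : BitString) :
    samelenCmp (b :: xs) (c :: ys) = (samelenCmp xs ys).then (compare b c) := by
  cases b <;> cases c <;> simp only [samelenCmp] <;> cases samelenCmp xs ys <;> rfl

theorem samelenCmp_eq_compare_bdec {x y : BitString} (h : x.length = y.length) :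
    samelenCmp x y = compare (bdec x) (bdec y) := by
  induction x generalizing y with
  | nil => cases y <;> simp_all [samelenCmp]
  | cons b xs ih =>
    cases y with
    | nil => simp at h
    | cons c ys =>
      have hbc : compare b c = compare b.toNat c.toNat := by cases b <;> cases c <;> rfl
      rw [← Nat.compare_add_right_add_right _ _ 1, bdec_cons_add_one, bdec_cons_add_one,
        Nat.compare_mul_add_mul_add (Bool.toNat_lt b) (Bool.toNat_lt c),
        Nat.compare_add_right_add_right, samelenCmp_cons_cons, hbc, ih (Nat.succ_injective h)]

theorem two_pow_length_le_bdec_add_one (xs : BitString) : 2 ^ xs.length ≤ bdec xs + 1 := by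
  induction xs with
  | nil => rfl
  | cons b xs ih => rw [bdec_cons_add_one, List.length_cons, pow_succ]; omega

theorem bdec_add_one_lt_two_pow_length_succ (xs : BitString) :
    bdec xs + 1 < 2 ^ (xs.length + 1) := by
  induction xs with
  | nil => decide
  | cons b xs ih =>
    rw [bdec_cons_add_one, List.length_cons, pow_succ]
    have := Bool.toNat_lt b
    omega

theorem bdec_lt_bdec_of_length_lt {x y : BitString} (h : x.length < y.length) :
    bdec x < bdec y := by
  have hx := bdec_add_one_lt_two_pow_length_succ x
  have hy := two_pow_length_le_bdec_add_one y
  have : 2 ^ (x.length + 1) ≤ 2 ^ y.length := Nat.pow_le_pow_right two_pos h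
  omega

/-- The length-then-lexicographic comparison coincides with the natural order
of the bijective base-2 decodings. -/
theorem bcmp_eq_compare_bdec (x y : BitString) :
    bcmp x y = compare (bdec x) (bdec y) := by
  unfold bcmp
  rcases lt_trichotomy x.length y.length with h | h | h
  · rw [Nat.compare_eq_lt.mpr h, Nat.compare_eq_lt.mpr (bdec_lt_bdec_of_length_lt h)]
  · rw [Nat.compare_eq_eq.mpr h, samelenCmp_eq_compare_bdec h]
  · rw [Nat.compare_eq_gt.mpr h, Nat.compare_eq_gt.mpr (bdec_lt_bdec_of_length_lt h)]
end

section
/- The Ackermann encoding f from hereditarily finite sets to natural numbers, defined by f(x) = sum over a ∈ x of 2^(f(a)), is a bijection between hereditarily finite sets and the natural numbers. -/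
/-! Writing `ack (mk xs)` as the number whose binary digits are set exactly at the codes of the
elements of `xs`, uniqueness of binary expansions reduces `ack x = ack y` to equality of the sets
of element codes, hence by induction to extensional equality. Surjectivity holds by strong
induction: every bit index of `n` is smaller than `n`. -/

/-- Hereditarily finite sets, represented as finite trees: a set is given by a
(list of) its elements; equality of sets is the extensional equivalence `HF.Equiv`. -/
inductive HF : Type
  | mk : List HF → HF

namespace HF

/-- The list of elements of a hereditarily finite set. -/
def elems : HF → List HF
  | .mk xs => xs

/-- The Ackermann encoding: `ack x = Σ_{a ∈ x} 2 ^ (ack a)` (the sum ranges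
over the distinct elements of `x`, i.e. over the distinct codes). -/
def ack : HF → ℕ
  | .mk xs => (((xs.attach.map fun a => ack a.1).dedup).map fun k => 2 ^ k).sum
decreasing_by
  have := List.sizeOf_lt_of_mem a.2
  simp only [HF.mk.sizeOf_spec]
  omega

/-- Extensional equality of hereditarily finite sets: each element of one side
is (extensionally) an element of the other. -/
def Equiv : HF → HF → Prop
  | .mk xs, .mk ys =>
      (∀ a ∈ xs, ∃ b ∈ ys, Equiv a b) ∧ (∀ b ∈ ys, ∃ a ∈ xs.attach, Equiv a.1 b)
termination_by x _ => sizeOf x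
decreasing_by
  · have := List.sizeOf_lt_of_mem ‹a ∈ xs›; simp only [HF.mk.sizeOf_spec]; omega
  · have := List.sizeOf_lt_of_mem a.2; simp only [HF.mk.sizeOf_spec]; omega

/-- Set membership (up to extensional equality). -/
def Mem (a : HF) : HF → Prop
  | .mk xs => ∃ b ∈ xs, Equiv a b

/-- Set inclusion. -/
def Subset (x y : HF) : Prop := ∀ a, Mem a x → Mem a y

end HF

theorem List.toFinset_map_eq_toFinset_map_iff {α β : Type*} [DecidableEq β] {f : α → β}
    {xs ys : List α} :
    (xs.map f).toFinset = (ys.map f).toFinset ↔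
      (∀ a ∈ xs, ∃ b ∈ ys, f a = f b) ∧ (∀ b ∈ ys, ∃ a ∈ xs, f a = f b) := by
  simp only [Finset.Subset.antisymm_iff, Finset.subset_iff, List.mem_toFinset, List.mem_map,
    forall_exists_index, and_imp, forall_apply_eq_imp_iff₂]
  exact and_congr_left' (forall₂_congr fun _ _ => exists_congr fun _ => and_congr_right' eq_comm)

namespace HF

theorem ack_mk (xs : List HF) : ack (mk xs) = ∑ k ∈ (xs.map ack).toFinset, 2 ^ k := by
  rw [ack, List.attach_map_val (f := ack), ← List.sum_toFinset _ (List.nodup_dedup _)]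
  congr 1
  ext k
  simp only [List.mem_toFinset, List.mem_dedup]

theorem ack_mk_of_nodup {xs : List HF} (h : (xs.map ack).Nodup) :
    ack (mk xs) = ((xs.map ack).map (2 ^ ·)).sum := by
  rw [ack_mk, List.sum_toFinset _ h]

theorem ack_mk_eq_ack_mk_iff {xs ys : List HF} :
    ack (mk xs) = ack (mk ys) ↔ (xs.map ack).toFinset = (ys.map ack).toFinset := by
  simp only [ack_mk]
  exact (Finset.geomSum_injective le_rfl).eq_iff

theorem equiv_iff_ack_eq : ∀ x y : HF, Equiv x y ↔ ack x = ack y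
  | mk xs, mk ys => by
    have ih (a) (ha : a ∈ xs) (b) (hb : b ∈ ys) : Equiv a b ↔ ack a = ack b :=
      equiv_iff_ack_eq a b
    rw [Equiv, ack_mk_eq_ack_mk_iff, List.toFinset_map_eq_toFinset_map_iff]
    simp only [List.mem_attach, true_and, Subtype.exists, exists_prop]
    exact and_congr
      (forall₂_congr fun a ha => exists_congr fun b => and_congr_right fun hb => ih a ha b hb)
      (forall₂_congr fun b hb => exists_congr fun a => and_congr_right fun ha => ih a ha b hb)
termination_by x y => sizeOf x + sizeOf y
decreasing_by
  have := List.sizeOf_lt_of_mem ha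
  have := List.sizeOf_lt_of_mem hb
  simp only [mk.sizeOf_spec]
  omega

theorem ack_surjective : Function.Surjective ack := by
  intro n
  induction n using Nat.strong_induction_on with
  | _ n ih =>
    have hlt (i : ℕ) (hi : i ∈ n.bitIndices) : i < n :=
      Nat.lt_two_pow_self.trans_le (Nat.two_pow_le_of_mem_bitIndices hi)
    obtain ⟨xs, hxs⟩ : n.bitIndices ∈ Set.range (List.map ack) := by
      rw [Set.range_list_map]
      exact fun i hi => ih i (hlt i hi)
    refine ⟨mk xs, ?_⟩
    rw [ack_mk_of_nodup (hxs ▸ Nat.bitIndices_nodup), hxs, Nat.sum_map_two_pow_bitIndices]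

end HF

/-- The Ackermann encoding is a bijection between hereditarily finite sets
(taken up to extensional equality) and the natural numbers. -/
theorem ack_bijective :
    (∀ x y : HF, HF.Equiv x y ↔ HF.ack x = HF.ack y) ∧
    Function.Surjective HF.ack :=
  ⟨HF.equiv_iff_ack_eq, HF.ack_surjective⟩
end

section
/- Define P : ℕ → ℕ by P(0) = 1 and P(n+1) = P(n) XOR (2·P(n)), where XOR is bitwise exclusive or. Then for every finite set A of natural numbers with encoding a = Σ_{k∈A} 2^k, bit m of P(a) is 1 if and only if m = Σ_{k∈B} 2^k for some subset B ⊆ A. -/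
/-- `P 0 = 1`, `P (n+1) = P n XOR (2 * P n)`. -/
def P : ℕ → ℕ
  | 0 => 1
  | n + 1 => P n ^^^ (2 * P n)

lemma add_eq_xor_of_and_eq_zero : ∀ x : ℕ, ∀ y : ℕ, x &&& y = 0 → x + y = x ^^^ y := by
  intro x
  induction x using Nat.strong_induction_on with
  | _ x ih =>
    intro y h
    rcases Nat.eq_zero_or_pos x with rfl | hx
    · simp
    have h2 : x / 2 &&& y / 2 = 0 := by rw [← Nat.and_div_two, h]
    have ih2 := ih (x / 2) (Nat.div_lt_self hx (by norm_num)) (y / 2) h2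
    have hm : ¬(x % 2 = 1 ∧ y % 2 = 1) := by
      intro ⟨hx1, hy1⟩
      have := (Nat.and_mod_two_eq_one (a := x) (b := y)).2 ⟨hx1, hy1⟩
      rw [h] at this
      simp at this
    have hxd : (x ^^^ y) / 2 = x / 2 ^^^ y / 2 := Nat.xor_div_two
    have hxm := Nat.xor_mod_two_eq_one (a := x) (b := y)
    have d1 := Nat.div_add_mod x 2
    have d2 := Nat.div_add_mod y 2
    have d3 := Nat.div_add_mod (x ^^^ y) 2
    have m1 := Nat.mod_two_eq_zero_or_one x
    have m2 := Nat.mod_two_eq_zero_or_one y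
    have m3 := Nat.mod_two_eq_zero_or_one (x ^^^ y)
    omega

lemma testBit_enc (S : Finset ℕ) (j : ℕ) :
    Nat.testBit (∑ k ∈ S, 2 ^ k) j = decide (j ∈ S) := by
  induction S using Finset.induction_on generalizing j with
  | empty => simp
  | @insert a S ha ih =>
    rw [Finset.sum_insert ha]
    have hb : Nat.testBit (∑ k ∈ S, 2 ^ k) a = false := by rw [ih a]; simp [ha]
    have hand : (2 : ℕ) ^ a &&& (∑ k ∈ S, 2 ^ k) = 0 := by
      apply Nat.eq_of_testBit_eq
      intro i
      rw [Nat.testBit_and]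
      rcases eq_or_ne i a with rfl | hne
      · simp [hb]
      · simp [Nat.testBit_two_pow_of_ne (Ne.symm hne)]
    rw [add_eq_xor_of_and_eq_zero _ _ hand, Nat.testBit_xor, Nat.testBit_two_pow, ih]
    rcases eq_or_ne j a with rfl | hne
    · simp [ha]
    · simp [Ne.symm hne, hne, Finset.mem_insert]

lemma two_pow_mul_xor (e x y : ℕ) : 2 ^ e * (x ^^^ y) = 2 ^ e * x ^^^ 2 ^ e * y := by
  apply Nat.eq_of_testBit_eq
  intro i
  rw [mul_comm, mul_comm _ x, mul_comm _ y, ← Nat.shiftLeft_eq, ← Nat.shiftLeft_eq,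
    ← Nat.shiftLeft_eq, Nat.testBit_xor, Nat.testBit_shiftLeft, Nat.testBit_shiftLeft,
    Nat.testBit_shiftLeft, Nat.testBit_xor]
  cases decide (e ≤ i) <;> simp

lemma testBit_two_pow_mul (e x i : ℕ) :
    Nat.testBit (2 ^ e * x) i = (decide (e ≤ i) && Nat.testBit x (i - e)) := by
  rw [mul_comm, ← Nat.shiftLeft_eq, Nat.testBit_shiftLeft]

lemma P_add_two_pow (k : ℕ) : ∀ a : ℕ, P (a + 2 ^ k) = P a ^^^ 2 ^ (2 ^ k) * P a := by
  induction k with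
  | zero => intro a; simp [P]
  | succ k ih =>
    intro a
    have hsplit : a + 2 ^ (k + 1) = (a + 2 ^ k) + 2 ^ k := by rw [pow_succ]; ring
    rw [hsplit, ih, ih, two_pow_mul_xor]
    rw [Nat.xor_assoc, ← Nat.xor_assoc (2 ^ 2 ^ k * P a)]
    rw [Nat.xor_self, Nat.zero_xor, ← mul_assoc, ← pow_add, ← two_mul, ← pow_succ']

/-- For every finite set `A` of naturals with encoding `Σ_{k ∈ A} 2^k`, bit `m`
of `P (Σ_{k ∈ A} 2^k)` is 1 iff `m = Σ_{k ∈ B} 2^k` for some subset `B ⊆ A`. -/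
theorem testBit_P (A : Finset ℕ) (m : ℕ) :
    Nat.testBit (P (∑ k ∈ A, 2 ^ k)) m = true ↔
      ∃ B ⊆ A, m = ∑ k ∈ B, 2 ^ k := by
  induction A using Finset.induction_on generalizing m with
  | empty =>
    simp only [Finset.sum_empty]
    show Nat.testBit (P 0) m = true ↔ _
    rw [show P 0 = 1 from rfl]
    constructor
    · intro h
      have : m = 0 := by
        by_contra hm
        rw [show (1 : ℕ) = 2 ^ 0 from rfl, Nat.testBit_two_pow_of_ne (Ne.symm hm)] at h
        simp at h
      exact ⟨∅, Finset.Subset.refl _, by simp [this]⟩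
    · rintro ⟨B, hB, rfl⟩
      rw [Finset.subset_empty] at hB
      simp [hB]
  | @insert k A hk ih =>
    rw [Finset.sum_insert hk, add_comm, P_add_two_pow, Nat.testBit_xor, testBit_two_pow_mul]
    have hQ1 := ih m
    have hQ2 : (decide (2 ^ k ≤ m) && Nat.testBit (P (∑ x ∈ A, 2 ^ x)) (m - 2 ^ k)) = true ↔
        ∃ B ⊆ A, m = 2 ^ k + ∑ x ∈ B, 2 ^ x := by
      rw [Bool.and_eq_true, decide_eq_true_iff, ih]
      constructor
      · rintro ⟨hle, B, hB, hm⟩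
        exact ⟨B, hB, by omega⟩
      · rintro ⟨B, hB, rfl⟩
        exact ⟨Nat.le_add_right _ _, B, hB, by omega⟩
    have hex : ¬((∃ B ⊆ A, m = ∑ x ∈ B, 2 ^ x) ∧ ∃ B ⊆ A, m = 2 ^ k + ∑ x ∈ B, 2 ^ x) := by
      rintro ⟨⟨B, hB, rfl⟩, ⟨B', hB', hm'⟩⟩
      have hkB : k ∉ B := fun h => hk (hB h)
      have hkB' : k ∉ B' := fun h => hk (hB' h)
      have h1 : Nat.testBit (∑ x ∈ B, 2 ^ x) k = false := by rw [testBit_enc]; simp [hkB]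
      have h2 : Nat.testBit (∑ x ∈ B, 2 ^ x) k = true := by
        rw [hm', ← Finset.sum_insert hkB', testBit_enc]
        simp
      rw [h1] at h2
      exact absurd h2 (by simp)
    have hRHS : (∃ B ⊆ insert k A, m = ∑ x ∈ B, 2 ^ x) ↔
        ((∃ B ⊆ A, m = ∑ x ∈ B, 2 ^ x) ∨ ∃ B ⊆ A, m = 2 ^ k + ∑ x ∈ B, 2 ^ x) := by
      constructor
      · rintro ⟨B, hB, rfl⟩
        by_cases hkB : k ∈ B
        · right
          refine ⟨B.erase k, fun x hx => ?_, ?_⟩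
          · have := hB (Finset.mem_of_mem_erase hx)
            rcases Finset.mem_insert.1 this with rfl | h
            · exact absurd hx (Finset.notMem_erase x B)
            · exact h
          · conv_lhs => rw [← Finset.insert_erase hkB]
            rw [Finset.sum_insert (Finset.notMem_erase k B)]
        · left
          exact ⟨B, fun x hx => (Finset.mem_insert.1 (hB hx)).resolve_left
            (fun h => hkB (h ▸ hx)), rfl⟩
      · rintro (⟨B, hB, rfl⟩ | ⟨B, hB, rfl⟩)
        · exact ⟨B, hB.trans (Finset.subset_insert _ _), rfl⟩
        · refine ⟨insert k B, ?_, ?_⟩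
          · exact Finset.insert_subset_insert _ hB
          · rw [Finset.sum_insert (fun h => hk (hB h))]
    rw [hRHS]
    rcases h1 : Nat.testBit (P (∑ x ∈ A, 2 ^ x)) m with _ | _ <;>
      rcases h2 : (decide (2 ^ k ≤ m) && Nat.testBit (P (∑ x ∈ A, 2 ^ x)) (m - 2 ^ k))
        with _ | _ <;>
      rw [h1] at hQ1 <;> rw [h2] at hQ2 <;> simp_all
end
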